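/- arXiv:math/9308210 — 3 statements merged into one kernel-verified Lean document; each statement's English description precedes it below -/
import Mathlib

section
/- If S, E ⊆ ω₁ and the symmetric difference S Δ E is nonstationary, then the linear orders Φ(S) and Φ(E) are order-isomorphic. -/
open Set

noncomputable section

/-- The first uncountable ordinal. -/
def omegaOne : Ordinal := (Cardinal.aleph 1).ord

/-- A set of ordinals is closed: it contains the supremum of every
nonempty bounded subset of itself. -/
def OClosed (C : Set Ordinal) : Prop :=
  ∀ X ⊆ C, X.Nonempty → BddAbove X → sSup X ∈ C

/-- A club subset of `ω₁`: closed and unbounded in `ω₁`. -/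
def Club' (C : Set Ordinal) : Prop :=
  OClosed C ∧ C ⊆ Set.Iio omegaOne ∧ ∀ α < omegaOne, ∃ β ∈ C, α < β

open Classical in
/-- The block `τ_α`: `1 + η` if `α ∈ S` and `η` otherwise. -/
def tau (S : Set Ordinal) (α : Ordinal) : Type :=
  if α ∈ S then Unit ⊕ₗ ℚ else ℚ

instance (S : Set Ordinal) (α : Ordinal) : LinearOrder (tau S α) := by
  unfold tau; split <;> infer_instance

/-- `Φ(S) = 1 + η + Σ_{α<ω₁} τ_α`, realized as a lexicographically
ordered sum. -/
def Phi (S : Set Ordinal) : Type 1 :=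
  (ULift.{1} (Unit ⊕ₗ ℚ)) ⊕ₗ
    (Lex (Sigma (fun α : {β : Ordinal // β < omegaOne} => tau S α.1)))

instance (S : Set Ordinal) : LinearOrder (Phi S) := by
  unfold Phi; infer_instance

/-- The elements of `Φ(S)` lying in the initial `1 + η` part or in a block
`τ_β` with `β < α`. -/
def below (S : Set Ordinal) (α : Ordinal) : Set (Phi S) :=
  {x | Sum.elim (fun _ => True) (fun p => ((ofLex p).1).1 < α) (ofLex x)}

/-- The elements of `Φ(S)` lying in the block `τ_α`. -/
def inBlock (S : Set Ordinal) (α : Ordinal) : Set (Phi S) :=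
  {x | ∃ p, ofLex x = Sum.inr p ∧ ((ofLex p).1).1 = α}

/-! ### Auxiliary material -/

section Aux

/-! #### Transport of the order structure of `tau` across the type-level `if` -/

lemma drec_isTrue {p : Prop} {C : Sort*} (d : Decidable p) (hp : p)
    (f : ¬p → C) (g : p → C) :
    @Decidable.rec p (fun _ => C) f g d = g hp := by
  cases d with
  | isFalse h => exact absurd hp h
  | isTrue h => rfl

lemma drec_isFalse {p : Prop} {C : Sort*} (d : Decidable p) (hp : ¬p)
    (f : ¬p → C) (g : p → C) :
    @Decidable.rec p (fun _ => C) f g d = f hp := by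
  cases d with
  | isFalse h => rfl
  | isTrue h => exact absurd h hp

lemma ordIso_of_eq {A B : Type} [ia : LinearOrder A] [ib : LinearOrder B] (e : A = B)
    (he : HEq ia ib) : Nonempty (A ≃o B) := by
  subst e; cases he; exact ⟨OrderIso.refl _⟩

lemma tau_pos {S : Set Ordinal} {α : Ordinal} (h : α ∈ S) :
    Nonempty (tau S α ≃o (Unit ⊕ₗ ℚ)) := by
  apply ordIso_of_eq
  case e => unfold tau; exact if_pos h
  show HEq (instLinearOrderTau S α) _
  unfold instLinearOrderTau
  simp only [id_eq]
  rw [drec_isTrue _ h]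
  exact (eq_mpr_eq_cast _ ▸ cast_heq _ _)

lemma tau_neg {S : Set Ordinal} {α : Ordinal} (h : α ∉ S) :
    Nonempty (tau S α ≃o ℚ) := by
  apply ordIso_of_eq
  case e => unfold tau; exact if_neg h
  show HEq (instLinearOrderTau S α) _
  unfold instLinearOrderTau
  simp only [id_eq]
  rw [drec_isFalse _ h]
  exact (eq_mpr_eq_cast _ ▸ cast_heq _ _)

/-! #### Transfer of order properties along order isomorphisms -/

instance : Countable (Unit ⊕ₗ ℚ) := Countable.of_equiv _ (toLex : (Unit ⊕ ℚ) ≃ _)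

lemma noMax_of_iso {A B : Type*} [Preorder A] [Preorder B] (e : A ≃o B) [NoMaxOrder B] :
    NoMaxOrder A := by
  constructor
  intro a
  obtain ⟨y, hy⟩ := exists_gt (e a)
  exact ⟨e.symm y, by simpa using e.symm.strictMono hy⟩

lemma noMin_of_iso {A B : Type*} [Preorder A] [Preorder B] (e : A ≃o B) [NoMinOrder B] :
    NoMinOrder A := by
  constructor
  intro a
  obtain ⟨y, hy⟩ := exists_lt (e a)
  exact ⟨e.symm y, by simpa using e.symm.strictMono hy⟩

lemma dense_of_iso {A B : Type*} [Preorder A] [Preorder B] (e : A ≃o B) [DenselyOrdered B] :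
    DenselyOrdered A :=
  (denselyOrdered_iff_of_orderIsoClass e).mpr ‹_›

lemma countable_of_iso {A B : Type*} [Preorder A] [Preorder B] (e : A ≃o B) [Countable B] :
    Countable A := Countable.of_equiv _ e.symm.toEquiv

/-! #### Facts about `tau` -/

lemma tau_countable (S : Set Ordinal) (α : Ordinal) : Countable (tau S α) := by
  by_cases h : α ∈ S
  · obtain ⟨e⟩ := tau_pos h; exact countable_of_iso e
  · obtain ⟨e⟩ := tau_neg h; exact countable_of_iso e

lemma unitRat_bot_le (y : Unit ⊕ₗ ℚ) : toLex (Sum.inl ()) ≤ y := by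
  rcases hy : ofLex y with a | b
  · rw [show y = toLex (Sum.inl a) from by rw [← hy]; rfl]
  · rw [show y = toLex (Sum.inr b) from by rw [← hy]; rfl, Sum.Lex.toLex_le_toLex]
    exact Sum.Lex.sep _ _

lemma unitRat_bot_lt : toLex (Sum.inl ()) < toLex (Sum.inr (0 : ℚ)) := by
  rw [Sum.Lex.toLex_lt_toLex]
  exact Sum.Lex.sep _ _

lemma tau_dense (S : Set Ordinal) (α : Ordinal) : DenselyOrdered (tau S α) := by
  by_cases h : α ∈ S
  · obtain ⟨e⟩ := tau_pos h; exact dense_of_iso e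
  · obtain ⟨e⟩ := tau_neg h; exact dense_of_iso e

lemma tau_noMax (S : Set Ordinal) (α : Ordinal) : NoMaxOrder (tau S α) := by
  by_cases h : α ∈ S
  · obtain ⟨e⟩ := tau_pos h; exact noMax_of_iso e
  · obtain ⟨e⟩ := tau_neg h; exact noMax_of_iso e

lemma tau_nonempty (S : Set Ordinal) (α : Ordinal) : Nonempty (tau S α) := by
  by_cases h : α ∈ S
  · obtain ⟨e⟩ := tau_pos h; exact ⟨e.symm (toLex (Sum.inl ()))⟩
  · obtain ⟨e⟩ := tau_neg h; exact ⟨e.symm 0⟩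

lemma tau_noMin {S : Set Ordinal} {α : Ordinal} (h : α ∉ S) : NoMinOrder (tau S α) := by
  obtain ⟨e⟩ := tau_neg h; exact noMin_of_iso e

lemma tau_bot {S : Set Ordinal} {α : Ordinal} (h : α ∈ S) :
    ∃ b : tau S α, (∀ t, b ≤ t) ∧ ∃ t, b < t := by
  obtain ⟨e⟩ := tau_pos h
  refine ⟨e.symm (toLex (Sum.inl ())), fun t => ?_, ⟨e.symm (toLex (Sum.inr 0)), ?_⟩⟩
  · have := unitRat_bot_le (e t)
    simpa using e.symm.monotone this
  · exact e.symm.strictMono unitRat_bot_lt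

/-! #### Cantor-style isomorphism lemmas -/

lemma iso_of_bot {A B : Type*} [LinearOrder A] [LinearOrder B]
    [Countable A] [Countable B] [DenselyOrdered A] [DenselyOrdered B]
    [NoMaxOrder A] [NoMaxOrder B]
    (a : A) (b : B) (ha : ∀ x, a ≤ x) (hb : ∀ y, b ≤ y)
    (ha' : ∃ x, a < x) (hb' : ∃ y, b < y) : Nonempty (A ≃o B) := by
  haveI : DenselyOrdered {x : A // a < x} := by
    constructor
    rintro ⟨x, hx⟩ ⟨y, hy⟩ hlt
    rw [Subtype.mk_lt_mk] at hlt
    obtain ⟨z, hz1, hz2⟩ := exists_between hlt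
    exact ⟨⟨z, lt_trans hx hz1⟩, Subtype.mk_lt_mk.2 hz1, Subtype.mk_lt_mk.2 hz2⟩
  haveI : DenselyOrdered {y : B // b < y} := by
    constructor
    rintro ⟨x, hx⟩ ⟨y, hy⟩ hlt
    rw [Subtype.mk_lt_mk] at hlt
    obtain ⟨z, hz1, hz2⟩ := exists_between hlt
    exact ⟨⟨z, lt_trans hx hz1⟩, Subtype.mk_lt_mk.2 hz1, Subtype.mk_lt_mk.2 hz2⟩
  haveI : NoMinOrder {x : A // a < x} := by
    constructor
    rintro ⟨x, hx⟩
    obtain ⟨z, hz1, hz2⟩ := exists_between hx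
    exact ⟨⟨z, hz1⟩, Subtype.mk_lt_mk.2 hz2⟩
  haveI : NoMinOrder {y : B // b < y} := by
    constructor
    rintro ⟨x, hx⟩
    obtain ⟨z, hz1, hz2⟩ := exists_between hx
    exact ⟨⟨z, hz1⟩, Subtype.mk_lt_mk.2 hz2⟩
  haveI : NoMaxOrder {x : A // a < x} := by
    constructor
    rintro ⟨x, hx⟩
    obtain ⟨z, hz⟩ := exists_gt x
    exact ⟨⟨z, lt_trans hx hz⟩, Subtype.mk_lt_mk.2 hz⟩
  haveI : NoMaxOrder {y : B // b < y} := by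
    constructor
    rintro ⟨x, hx⟩
    obtain ⟨z, hz⟩ := exists_gt x
    exact ⟨⟨z, lt_trans hx hz⟩, Subtype.mk_lt_mk.2 hz⟩
  haveI : Nonempty {x : A // a < x} := by obtain ⟨x, hx⟩ := ha'; exact ⟨⟨x, hx⟩⟩
  haveI : Nonempty {y : B // b < y} := by obtain ⟨y, hy⟩ := hb'; exact ⟨⟨y, hy⟩⟩
  obtain ⟨g⟩ := Order.iso_of_countable_dense {x : A // a < x} {y : B // b < y}
  refine ⟨⟨⟨fun x => if h : a < x then (g ⟨x, h⟩).1 else b,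
            fun y => if h : b < y then (g.symm ⟨y, h⟩).1 else a, ?_, ?_⟩, ?_⟩⟩
  · intro x
    dsimp only
    by_cases h : a < x
    · rw [dif_pos h, dif_pos (g ⟨x, h⟩).2]
      have h2 : (⟨((g ⟨x, h⟩) : B), (g ⟨x, h⟩).2⟩ : {y : B // b < y}) = g ⟨x, h⟩ := rfl
      rw [h2, g.symm_apply_apply]
    · rw [dif_neg h, dif_neg (lt_irrefl b)]
      exact le_antisymm (ha x) (not_lt.1 h)
  · intro y
    dsimp only
    by_cases h : b < y
    · rw [dif_pos h, dif_pos (g.symm ⟨y, h⟩).2]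
      have h2 : (⟨((g.symm ⟨y, h⟩) : A), (g.symm ⟨y, h⟩).2⟩ : {x : A // a < x}) = g.symm ⟨y, h⟩ :=
        rfl
      rw [h2, g.apply_symm_apply]
    · rw [dif_neg h, dif_neg (lt_irrefl a)]
      exact le_antisymm (hb y) (not_lt.1 h)
  · intro x y
    simp only [Equiv.coe_fn_mk]
    by_cases hx : a < x <;> by_cases hy : a < y
    · rw [dif_pos hx, dif_pos hy, Subtype.coe_le_coe, g.le_iff_le]
      exact Subtype.mk_le_mk
    · have hy' : y = a := le_antisymm (not_lt.1 hy) (ha y)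
      rw [dif_pos hx, dif_neg hy]
      constructor
      · intro hle
        exact absurd (lt_of_lt_of_le (g ⟨x, hx⟩).2 hle) (lt_irrefl b)
      · intro hle
        exact absurd (lt_of_lt_of_le hx hle) (by rw [hy']; exact lt_irrefl a)
    · rw [dif_neg hx, dif_pos hy]
      have hx' : x = a := le_antisymm (not_lt.1 hx) (ha x)
      constructor
      · intro _; rw [hx']; exact le_of_lt hy
      · intro _; exact hb _
    · rw [dif_neg hx, dif_neg hy]
      have hx' : x = a := le_antisymm (not_lt.1 hx) (ha x)
      have hy' : y = a := le_antisymm (not_lt.1 hy) (ha y)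
      simp [hx', hy']

/-! #### Decomposing a linear order into the fibers of a monotone map -/

lemma cast_fiber_val {A J : Type*} (f : A → J) {j j' : J} (e : j = j')
    (s : {x : A // f x = j}) : ((e ▸ s : {x : A // f x = j'}) : A) = (s : A) := by
  cases e; rfl

def fiberOrderIso {A J : Type*} [LinearOrder A] [LinearOrder J] (f : A → J)
    (hf : Monotone f) : A ≃o Σₗ (j : J), {x : A // f x = j} where
  toFun x := toLex ⟨f x, x, rfl⟩
  invFun p := ((ofLex p).2 : A)
  left_inv x := rfl
  right_inv p := by
    rcases hp : ofLex p with ⟨j, x, hx⟩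
    have : p = toLex (⟨j, x, hx⟩ : Sigma fun j : J => {x : A // f x = j}) := by
      rw [← hp]; rfl
    subst this
    subst hx
    rfl
  map_rel_iff' {x y} := by
    change (toLex (⟨f x, x, rfl⟩ : Sigma fun j : J => {x : A // f x = j}) ≤ toLex ⟨f y, y, rfl⟩) ↔ x ≤ y
    rw [Sigma.Lex.le_def]
    constructor
    · rintro (h | ⟨h, h2⟩)
      · by_contra hxy
        exact absurd (hf (le_of_not_ge hxy)) (not_le.2 h)
      · have := Subtype.coe_le_coe.2 h2
        rwa [cast_fiber_val f h] at this
    · intro hxy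
      rcases lt_or_eq_of_le (hf hxy) with h | h
      · exact Or.inl h
      · refine Or.inr ⟨h, ?_⟩
        rw [← Subtype.coe_le_coe]
        show ((h ▸ (⟨x, rfl⟩ : {a : A // f a = f x}) : {a : A // f a = f y}) : A) ≤ y
        rw [cast_fiber_val f h]
        exact hxy

lemma cast_map_le_iff {J : Type*} {F G : J → Type*}
    [∀ j, LinearOrder (F j)] [∀ j, LinearOrder (G j)]
    (e : ∀ j, F j ≃o G j) {j k : J} (h : j = k) (x : F j) (y : F k) :
    (h ▸ (e j x) ≤ e k y) ↔ (h ▸ x ≤ y) := by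
  cases h
  exact (e j).le_iff_le

def sigmaLexCongr {J : Type*} [LinearOrder J] {F G : J → Type*}
    [∀ j, LinearOrder (F j)] [∀ j, LinearOrder (G j)]
    (e : ∀ j, F j ≃o G j) : (Σₗ (j : J), F j) ≃o (Σₗ (j : J), G j) where
  toFun p := toLex ⟨(ofLex p).1, e _ ((ofLex p).2)⟩
  invFun p := toLex ⟨(ofLex p).1, (e _).symm ((ofLex p).2)⟩
  left_inv p := by
    show toLex ⟨(ofLex p).1, (e _).symm (e _ ((ofLex p).2))⟩ = p
    rw [OrderIso.symm_apply_apply]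
    rfl
  right_inv p := by
    show toLex ⟨(ofLex p).1, e _ ((e _).symm ((ofLex p).2))⟩ = p
    rw [OrderIso.apply_symm_apply]
    rfl
  map_rel_iff' {p q} := by
    simp only [Equiv.coe_fn_mk]
    rw [Sigma.Lex.le_def, Sigma.Lex.le_def]
    constructor
    · rintro (h | ⟨h, h2⟩)
      · exact Or.inl h
      · exact Or.inr ⟨h, (cast_map_le_iff e h _ _).1 h2⟩
    · rintro (h | ⟨h, h2⟩)
      · exact Or.inl h
      · exact Or.inr ⟨h, (cast_map_le_iff e h _ _).2 h2⟩

/-! #### Elements of `Phi` -/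

abbrev Idx : Type 1 := {β : Ordinal // β < omegaOne}

def mkL (X : Set Ordinal) (a : Unit ⊕ₗ ℚ) : Phi X :=
  toLex (Sum.inl (ULift.up a))

def mkR (X : Set Ordinal) (α : Idx) (t : tau X α.1) : Phi X :=
  toLex (Sum.inr (toLex ⟨α, t⟩))

lemma phi_cases {X : Set Ordinal} (x : Phi X) :
    (∃ a, x = mkL X a) ∨ ∃ α t, x = mkR X α t := by
  rcases h : ofLex x with a | p
  · exact Or.inl ⟨a.down, by rw [← toLex_ofLex x, h]; rfl⟩
  · exact Or.inr ⟨(ofLex p).1, (ofLex p).2, by rw [← toLex_ofLex x, h]; rfl⟩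

lemma mkL_le_mkL {X : Set Ordinal} {a b : Unit ⊕ₗ ℚ} :
    mkL X a ≤ mkL X b ↔ a ≤ b := by
  show toLex (Sum.inl (ULift.up a)) ≤ toLex (Sum.inl (ULift.up b)) ↔ _
  rw [Sum.Lex.toLex_le_toLex, Sum.lex_inl_inl]
  exact ULift.up_le

lemma mkL_lt_mkL {X : Set Ordinal} {a b : Unit ⊕ₗ ℚ} :
    mkL X a < mkL X b ↔ a < b := by
  show toLex (Sum.inl (ULift.up a)) < toLex (Sum.inl (ULift.up b)) ↔ _
  rw [Sum.Lex.toLex_lt_toLex, Sum.lex_inl_inl]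
  exact ULift.up_lt

lemma mkL_lt_mkR {X : Set Ordinal} (a : Unit ⊕ₗ ℚ) (α : Idx) (t : tau X α.1) :
    mkL X a < mkR X α t := by
  show toLex (Sum.inl _) < toLex (Sum.inr _)
  rw [Sum.Lex.toLex_lt_toLex]
  exact Sum.Lex.sep _ _

lemma not_mkR_le_mkL {X : Set Ordinal} (a : Unit ⊕ₗ ℚ) (α : Idx) (t : tau X α.1) :
    ¬ (mkR X α t ≤ mkL X a) :=
  not_le.2 (mkL_lt_mkR a α t)

lemma mkR_le_mkR_same {X : Set Ordinal} {α : Idx} {t u : tau X α.1} :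
    mkR X α t ≤ mkR X α u ↔ t ≤ u := by
  show toLex (Sum.inr _) ≤ toLex (Sum.inr _) ↔ _
  rw [Sum.Lex.toLex_le_toLex, Sum.lex_inr_inr, Sigma.Lex.le_def]
  constructor
  · rintro (h | ⟨h, h2⟩)
    · exact absurd h (lt_irrefl α)
    · exact h2
  · intro h
    exact Or.inr ⟨rfl, h⟩

lemma mkR_lt_mkR_same {X : Set Ordinal} {α : Idx} {t u : tau X α.1} :
    mkR X α t < mkR X α u ↔ t < u := by
  show toLex (Sum.inr _) < toLex (Sum.inr _) ↔ _
  rw [Sum.Lex.toLex_lt_toLex, Sum.lex_inr_inr, Sigma.Lex.lt_def]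
  constructor
  · rintro (h | ⟨h, h2⟩)
    · exact absurd h (lt_irrefl α)
    · exact h2
  · intro h
    exact Or.inr ⟨rfl, h⟩

lemma mkR_lt_mkR_of_idx {X : Set Ordinal} {α β : Idx} (h : α < β)
    (t : tau X α.1) (u : tau X β.1) : mkR X α t < mkR X β u := by
  show toLex (Sum.inr _) < toLex (Sum.inr _)
  rw [Sum.Lex.toLex_lt_toLex]
  exact Sum.Lex.inr (Sigma.Lex.lt_def.2 (Or.inl h))

lemma mkR_lt_cases {X : Set Ordinal} {α β : Idx} {t : tau X α.1} {u : tau X β.1}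
    (h : mkR X α t < mkR X β u) : α < β ∨ ∃ e : α = β, (e ▸ t) < u := by
  rw [show mkR X α t < mkR X β u ↔ _ from Iff.rfl] at h
  have h' := Sum.Lex.toLex_lt_toLex.1 h
  rw [Sum.lex_inr_inr] at h'
  exact Sigma.Lex.lt_def.1 h'

lemma mkR_le_idx {X : Set Ordinal} {α β : Idx} {t : tau X α.1} {u : tau X β.1}
    (h : mkR X α t ≤ mkR X β u) : α ≤ β := by
  have h' := Sum.Lex.toLex_le_toLex.1 h
  rw [Sum.lex_inr_inr] at h'
  rcases Sigma.Lex.le_def.1 h' with h2 | ⟨h2, _⟩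
  · exact le_of_lt h2
  · exact le_of_eq h2

/-! #### The fiber map -/

open Classical in
def idxF (C : Set Ordinal) (hC : OClosed C) (α : Ordinal) : WithBot ↥C :=
  if h : (C ∩ Iic α).Nonempty
  then ((⟨sSup (C ∩ Iic α),
      hC _ inter_subset_left h ⟨α, fun _ hx => hx.2⟩⟩ : ↥C) : WithBot ↥C)
  else ⊥

def FF (C : Set Ordinal) (hC : OClosed C) (X : Set Ordinal) (x : Phi X) : WithBot ↥C :=
  Sum.elim (fun _ => ⊥) (fun p => idxF C hC ((ofLex p).1.1)) (ofLex x)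

lemma FF_mkL {C : Set Ordinal} {hC : OClosed C} {X : Set Ordinal} (a : Unit ⊕ₗ ℚ) :
    FF C hC X (mkL X a) = ⊥ := rfl

lemma FF_mkR {C : Set Ordinal} {hC : OClosed C} {X : Set Ordinal} (α : Idx)
    (t : tau X α.1) : FF C hC X (mkR X α t) = idxF C hC α.1 := rfl

lemma idxF_self {C : Set Ordinal} (hC : OClosed C) {γ : ↥C} :
    idxF C hC γ.1 = (γ : WithBot ↥C) := by
  have hne : (C ∩ Iic γ.1).Nonempty := ⟨γ.1, γ.2, mem_Iic.2 le_rfl⟩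
  rw [idxF, dif_pos hne]
  congr 1
  apply Subtype.ext
  exact le_antisymm (csSup_le hne fun b hb => hb.2)
    (le_csSup ⟨γ.1, fun _ hx => hx.2⟩ ⟨γ.2, mem_Iic.2 le_rfl⟩)

lemma idxF_eq_coe {C : Set Ordinal} {hC : OClosed C} {γ : ↥C} {α : Ordinal}
    (h : idxF C hC α = (γ : WithBot ↥C)) :
    γ.1 ≤ α ∧ ∀ c ∈ C, c ≤ α → c ≤ γ.1 := by
  rcases em (C ∩ Iic α).Nonempty with hne | hne
  · rw [idxF, dif_pos hne] at h
    have h2 : sSup (C ∩ Iic α) = γ.1 := congrArg Subtype.val (WithBot.coe_inj.1 h)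
    constructor
    · rw [← h2]; exact csSup_le hne fun b hb => hb.2
    · intro c hc hcα
      rw [← h2]
      exact le_csSup ⟨α, fun _ hx => hx.2⟩ ⟨hc, hcα⟩
  · rw [idxF, dif_neg hne] at h
    exact absurd h.symm (WithBot.coe_ne_bot)

lemma idxF_eq_bot {C : Set Ordinal} {hC : OClosed C} {α : Ordinal}
    (h : idxF C hC α = ⊥) : ∀ c ∈ C, ¬ c ≤ α := by
  rcases em (C ∩ Iic α).Nonempty with hne | hne
  · rw [idxF, dif_pos hne] at h
    exact absurd h (WithBot.coe_ne_bot)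
  · intro c hc hcα
    exact hne ⟨c, hc, hcα⟩

lemma idxF_mono {C : Set Ordinal} (hC : OClosed C) {α β : Ordinal} (h : α ≤ β) :
    idxF C hC α ≤ idxF C hC β := by
  rcases em (C ∩ Iic α).Nonempty with h1 | h1
  · have h2 : (C ∩ Iic β).Nonempty := h1.mono (inter_subset_inter_right _ (Iic_subset_Iic.2 h))
    rw [idxF, dif_pos h1, idxF, dif_pos h2]
    exact WithBot.coe_le_coe.2 (Subtype.mk_le_mk.2 (csSup_le_csSup ⟨β, fun _ hx => hx.2⟩ h1
      (inter_subset_inter_right _ (Iic_subset_Iic.2 h))))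
  · rw [idxF, dif_neg h1]
    exact bot_le

lemma FF_mono {C : Set Ordinal} (hC : OClosed C) (X : Set Ordinal) :
    Monotone (FF C hC X) := by
  intro x y hxy
  rcases phi_cases x with ⟨a, rfl⟩ | ⟨α, t, rfl⟩
  · rw [FF_mkL]; exact bot_le
  · rcases phi_cases y with ⟨b, rfl⟩ | ⟨β, u, rfl⟩
    · exact absurd hxy (not_mkR_le_mkL b α t)
    · rw [FF_mkR, FF_mkR]
      exact idxF_mono hC (mkR_le_idx hxy)

/-! #### Fibers of the fiber map -/

abbrev Fib (C : Set Ordinal) (hC : OClosed C) (X : Set Ordinal) (j : WithBot ↥C) :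
    Type 1 :=
  {x : Phi X // FF C hC X x = j}

lemma fib_noMax {C : Set Ordinal} (hC : OClosed C) (X : Set Ordinal) (j : WithBot ↥C) :
    NoMaxOrder (Fib C hC X j) := by
  constructor
  rintro ⟨x, hx⟩
  rcases phi_cases x with ⟨a, rfl⟩ | ⟨α, t, rfl⟩
  · obtain ⟨a', ha'⟩ := exists_gt a
    refine ⟨⟨mkL X a', by rw [FF_mkL]; rw [FF_mkL] at hx; exact hx⟩, ?_⟩
    exact Subtype.mk_lt_mk.2 (mkL_lt_mkL.2 ha')
  · haveI := tau_noMax X α.1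
    obtain ⟨t', ht'⟩ := exists_gt t
    refine ⟨⟨mkR X α t', by rw [FF_mkR]; rw [FF_mkR] at hx; exact hx⟩, ?_⟩
    exact Subtype.mk_lt_mk.2 (mkR_lt_mkR_same.2 ht')

lemma fib_dense {C : Set Ordinal} (hC : OClosed C) (X : Set Ordinal) (j : WithBot ↥C) :
    DenselyOrdered (Fib C hC X j) := by
  constructor
  rintro ⟨x, hx⟩ ⟨y, hy⟩ hlt
  rw [Subtype.mk_lt_mk] at hlt
  rcases phi_cases x with ⟨a, rfl⟩ | ⟨α, t, rfl⟩
  · rcases phi_cases y with ⟨b, rfl⟩ | ⟨β, u, rfl⟩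
    · obtain ⟨c, hc1, hc2⟩ := exists_between (mkL_lt_mkL.1 hlt)
      refine ⟨⟨mkL X c, by rw [FF_mkL]; rw [FF_mkL] at hx; exact hx⟩, ?_, ?_⟩
      · exact Subtype.mk_lt_mk.2 (mkL_lt_mkL.2 hc1)
      · exact Subtype.mk_lt_mk.2 (mkL_lt_mkL.2 hc2)
    · obtain ⟨a', ha'⟩ := exists_gt a
      refine ⟨⟨mkL X a', by rw [FF_mkL]; rw [FF_mkL] at hx; exact hx⟩, ?_, ?_⟩
      · exact Subtype.mk_lt_mk.2 (mkL_lt_mkL.2 ha')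
      · exact Subtype.mk_lt_mk.2 (mkL_lt_mkR a' β u)
  · rcases phi_cases y with ⟨b, rfl⟩ | ⟨β, u, rfl⟩
    · exact absurd hlt.le (not_mkR_le_mkL b α t)
    · rcases mkR_lt_cases hlt with hidx | ⟨e, h2⟩
      · by_cases hbot : ∃ u', u' < u
        · obtain ⟨u', hu'⟩ := hbot
          refine ⟨⟨mkR X β u', by rw [FF_mkR]; rw [FF_mkR] at hy; exact hy⟩, ?_, ?_⟩
          · exact Subtype.mk_lt_mk.2 (mkR_lt_mkR_of_idx hidx t u')
          · exact Subtype.mk_lt_mk.2 (mkR_lt_mkR_same.2 hu')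
        · haveI := tau_noMax X α.1
          obtain ⟨t', ht'⟩ := exists_gt t
          refine ⟨⟨mkR X α t', by rw [FF_mkR]; rw [FF_mkR] at hx; exact hx⟩, ?_, ?_⟩
          · exact Subtype.mk_lt_mk.2 (mkR_lt_mkR_same.2 ht')
          · exact Subtype.mk_lt_mk.2 (mkR_lt_mkR_of_idx hidx t' u)
      · subst e
        have h2' : t < u := h2
        haveI := tau_dense X α.1
        obtain ⟨v, hv1, hv2⟩ := exists_between h2'
        refine ⟨⟨mkR X α v, by rw [FF_mkR]; rw [FF_mkR] at hx; exact hx⟩, ?_, ?_⟩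
        · exact Subtype.mk_lt_mk.2 (mkR_lt_mkR_same.2 hv1)
        · exact Subtype.mk_lt_mk.2 (mkR_lt_mkR_same.2 hv2)

lemma countable_Iio_of_lt {δ : Ordinal} (h : δ < omegaOne) : Countable ↥(Iio δ) := by
  have h1 : δ.card < Cardinal.aleph 1 := Cardinal.lt_ord.1 h
  have h2 : Cardinal.aleph 1 = Order.succ Cardinal.aleph0 := by
    rw [← Cardinal.aleph_zero, ← Cardinal.aleph_succ, Ordinal.succ_zero]
  rw [h2, Order.lt_succ_iff] at h1
  have h3 : Cardinal.mk ↥(Iio δ) ≤ Cardinal.aleph0 := by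
    rw [Ordinal.mk_Iio_ordinal]
    exact le_trans (Cardinal.lift_le.mpr h1) (le_of_eq Cardinal.lift_aleph0)
  exact Cardinal.mk_le_aleph0_iff.1 h3

lemma omegaOne_pos : (0 : Ordinal) < omegaOne := by
  rw [omegaOne, Cardinal.lt_ord, Ordinal.card_zero]
  exact lt_trans Cardinal.aleph0_pos Cardinal.aleph0_lt_aleph_one

lemma fib_countable {C : Set Ordinal} (hC : OClosed C) (X : Set Ordinal)
    (hCsub : C ⊆ Set.Iio omegaOne) (hCun : ∀ α < omegaOne, ∃ β ∈ C, α < β)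
    (j : WithBot ↥C) : Countable (Fib C hC X j) := by
  have hδ : ∃ δ, δ < omegaOne ∧
      ∀ (α : Idx) (t : tau X α.1), FF C hC X (mkR X α t) = j → α.1 < δ := by
    rcases j with _ | γ
    · obtain ⟨δ, hδC, _⟩ := hCun 0 omegaOne_pos
      refine ⟨δ, hCsub hδC, fun α t hFF => ?_⟩
      rw [FF_mkR] at hFF
      exact not_le.1 (idxF_eq_bot hFF δ hδC)
    · obtain ⟨δ, hδC, hγδ⟩ := hCun γ.1 (hCsub γ.2)
      refine ⟨δ, hCsub hδC, fun α t hFF => ?_⟩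
      rw [FF_mkR] at hFF
      by_contra hle
      exact absurd (lt_of_le_of_lt ((idxF_eq_coe hFF).2 δ hδC (not_lt.1 hle)) hγδ)
        (lt_irrefl δ)
  obtain ⟨δ, hδlt, hbound⟩ := hδ
  haveI : Countable ↥(Iio δ) := countable_Iio_of_lt hδlt
  haveI : Countable {a : Idx // a.1 < δ} := by
    have hinj : Function.Injective
        (fun a : {a : Idx // a.1 < δ} => (⟨a.1.1, a.2⟩ : ↥(Iio δ))) := by
      intro a b hab
      have h5 : ((⟨a.1.1, a.2⟩ : ↥(Iio δ)) : Ordinal) = ((⟨b.1.1, b.2⟩ : ↥(Iio δ)) : Ordinal) :=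
        congrArg Subtype.val hab
      exact Subtype.ext (Subtype.ext h5)
    exact hinj.countable
  have hTc : (range (mkL X) ∪
      ⋃ (a : {a : Idx // a.1 < δ}), range (mkR X a.1)).Countable := by
    refine (Set.countable_range _).union (Set.countable_iUnion fun a => ?_)
    haveI := tau_countable X a.1.1
    exact Set.countable_range _
  have hsub : {x : Phi X | FF C hC X x = j} ⊆
      range (mkL X) ∪ ⋃ (a : {a : Idx // a.1 < δ}), range (mkR X a.1) := by
    intro x hx
    rcases phi_cases x with ⟨a, rfl⟩ | ⟨α, t, rfl⟩
    · exact Or.inl (mem_range_self a)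
    · refine Or.inr (mem_iUnion.2 ⟨⟨α, hbound α t hx⟩, mem_range_self t⟩)
  exact (hTc.mono hsub).to_subtype

lemma fib_bot {C : Set Ordinal} (hC : OClosed C) (X : Set Ordinal) :
    ∃ b : Fib C hC X ⊥, (∀ x, b ≤ x) ∧ ∃ x, b < x := by
  refine ⟨⟨mkL X (toLex (Sum.inl ())), FF_mkL _⟩, ?_, ?_⟩
  · rintro ⟨x, hx⟩
    rcases phi_cases x with ⟨a, rfl⟩ | ⟨α, t, rfl⟩
    · exact Subtype.mk_le_mk.2 (mkL_le_mkL.2 (unitRat_bot_le a))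
    · exact Subtype.mk_le_mk.2 (mkL_lt_mkR _ α t).le
  · refine ⟨⟨mkL X (toLex (Sum.inr 0)), FF_mkL _⟩, ?_⟩
    exact Subtype.mk_lt_mk.2 (mkL_lt_mkL.2 unitRat_bot_lt)

lemma fib_coe_bot {C : Set Ordinal} (hC : OClosed C) (X : Set Ordinal) (γ : ↥C)
    (hγlt : γ.1 < omegaOne) (hmem : γ.1 ∈ X) :
    ∃ b : Fib C hC X (γ : WithBot ↥C), (∀ x, b ≤ x) ∧ ∃ x, b < x := by
  set γ' : Idx := ⟨γ.1, hγlt⟩ with hγ'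
  obtain ⟨b0, hb0, t1, ht1⟩ := tau_bot (show γ'.1 ∈ X from hmem)
  have hmemb : ∀ t : tau X γ'.1, FF C hC X (mkR X γ' t) = (γ : WithBot ↥C) := by
    intro t
    rw [FF_mkR]
    exact idxF_self hC
  refine ⟨⟨mkR X γ' b0, hmemb b0⟩, ?_, ⟨⟨mkR X γ' t1, hmemb t1⟩, ?_⟩⟩
  · rintro ⟨x, hx⟩
    rcases phi_cases x with ⟨a, rfl⟩ | ⟨α, t, rfl⟩
    · rw [FF_mkL] at hx
      exact absurd hx.symm WithBot.coe_ne_bot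
    · rw [FF_mkR] at hx
      have h1 : γ.1 ≤ α.1 := (idxF_eq_coe hx).1
      rcases lt_or_eq_of_le h1 with h2 | h2
      · exact Subtype.mk_le_mk.2 (mkR_lt_mkR_of_idx (Subtype.mk_lt_mk.2 h2) b0 t).le
      · obtain rfl : γ' = α := Subtype.ext h2
        exact Subtype.mk_le_mk.2 (mkR_le_mkR_same.2 (hb0 t))
  · exact Subtype.mk_lt_mk.2 (mkR_lt_mkR_same.2 ht1)

lemma fib_coe_nonempty {C : Set Ordinal} (hC : OClosed C) (X : Set Ordinal) (γ : ↥C)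
    (hγlt : γ.1 < omegaOne) : Nonempty (Fib C hC X (γ : WithBot ↥C)) := by
  set γ' : Idx := ⟨γ.1, hγlt⟩
  obtain ⟨t0⟩ := tau_nonempty X γ'.1
  exact ⟨⟨mkR X γ' t0, by rw [FF_mkR]; exact idxF_self hC⟩⟩

lemma fib_coe_noMin {C : Set Ordinal} (hC : OClosed C) (X : Set Ordinal) (γ : ↥C)
    (hγlt : γ.1 < omegaOne) (hmem : γ.1 ∉ X) :
    NoMinOrder (Fib C hC X (γ : WithBot ↥C)) := by
  set γ' : Idx := ⟨γ.1, hγlt⟩ with hγ'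
  have hmemb : ∀ t : tau X γ'.1, FF C hC X (mkR X γ' t) = (γ : WithBot ↥C) := by
    intro t
    rw [FF_mkR]
    exact idxF_self hC
  constructor
  rintro ⟨x, hx⟩
  rcases phi_cases x with ⟨a, rfl⟩ | ⟨α, t, rfl⟩
  · rw [FF_mkL] at hx
    exact absurd hx.symm WithBot.coe_ne_bot
  · rw [FF_mkR] at hx
    have h1 : γ.1 ≤ α.1 := (idxF_eq_coe hx).1
    rcases lt_or_eq_of_le h1 with h2 | h2
    · obtain ⟨t0⟩ := tau_nonempty X γ'.1
      exact ⟨⟨mkR X γ' t0, hmemb t0⟩,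
        Subtype.mk_lt_mk.2 (mkR_lt_mkR_of_idx (Subtype.mk_lt_mk.2 h2) t0 t)⟩
    · obtain rfl : γ' = α := Subtype.ext h2
      haveI := tau_noMin (show γ'.1 ∉ X from hmem)
      obtain ⟨t', ht'⟩ := exists_lt t
      exact ⟨⟨mkR X γ' t', hmemb t'⟩, Subtype.mk_lt_mk.2 (mkR_lt_mkR_same.2 ht')⟩

end Aux

/-- if `S Δ E` is nonstationary then `Φ(S) ≅ Φ(E)`. -/
theorem stmt14 (S E : Set Ordinal) (hS : S ⊆ Set.Iio omegaOne)
    (hE : E ⊆ Set.Iio omegaOne)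
    (h : ∃ C, Club' C ∧ symmDiff S E ∩ C = ∅) :
    Nonempty (Phi S ≃o Phi E) := by
  obtain ⟨C, ⟨hCl, hCsub, hCun⟩, hdisj⟩ := h
  have hSE : ∀ γ : ↥C, (γ.1 ∈ S ↔ γ.1 ∈ E) := by
    intro γ
    have hns : γ.1 ∉ symmDiff S E := by
      intro hmem
      exact absurd (mem_inter hmem γ.2) (by rw [hdisj]; exact notMem_empty _)
    rw [Set.mem_symmDiff] at hns
    push_neg at hns
    exact ⟨hns.1, hns.2⟩
  have key : ∀ j : WithBot ↥C, Nonempty (Fib C hCl S j ≃o Fib C hCl E j) := by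
    intro j
    induction j using WithBot.recBotCoe with
    | bot =>
      haveI := fib_countable hCl S hCsub hCun (⊥ : WithBot ↥C)
      haveI := fib_countable hCl E hCsub hCun (⊥ : WithBot ↥C)
      haveI := fib_dense hCl S (⊥ : WithBot ↥C)
      haveI := fib_dense hCl E (⊥ : WithBot ↥C)
      haveI := fib_noMax hCl S (⊥ : WithBot ↥C)
      haveI := fib_noMax hCl E (⊥ : WithBot ↥C)
      obtain ⟨bS, hbS, hbS'⟩ := fib_bot hCl S
      obtain ⟨bE, hbE, hbE'⟩ := fib_bot hCl E
      exact iso_of_bot bS bE hbS hbE hbS' hbE'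
    | coe γ =>
      haveI := fib_countable hCl S hCsub hCun (γ : WithBot ↥C)
      haveI := fib_countable hCl E hCsub hCun (γ : WithBot ↥C)
      haveI := fib_dense hCl S (γ : WithBot ↥C)
      haveI := fib_dense hCl E (γ : WithBot ↥C)
      haveI := fib_noMax hCl S (γ : WithBot ↥C)
      haveI := fib_noMax hCl E (γ : WithBot ↥C)
      by_cases hγ : γ.1 ∈ S
      · obtain ⟨bS, hbS, hbS'⟩ := fib_coe_bot hCl S γ (hCsub γ.2) hγ
        obtain ⟨bE, hbE, hbE'⟩ := fib_coe_bot hCl E γ (hCsub γ.2) ((hSE γ).1 hγ)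
        exact iso_of_bot bS bE hbS hbE hbS' hbE'
      · haveI := fib_coe_noMin hCl S γ (hCsub γ.2) hγ
        haveI := fib_coe_noMin hCl E γ (hCsub γ.2) (fun hc => hγ ((hSE γ).2 hc))
        haveI := fib_coe_nonempty hCl S γ (hCsub γ.2)
        haveI := fib_coe_nonempty hCl E γ (hCsub γ.2)
        exact Order.iso_of_countable_dense _ _
  exact ⟨((fiberOrderIso (FF C hCl S) (FF_mono hCl S)).trans
    (sigmaLexCongr fun j => Classical.choice (key j))).trans
    (fiberOrderIso (FF C hCl E) (FF_mono hCl E)).symm⟩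
end
end

section
/- In the linear order Φ(S), for each α ∈ S, the set of elements lying in blocks τ_β with β < α (together with the initial 1 + η part) has a least upper bound in Φ(S), namely the first element of the block τ_α = 1 + η. -/
open Set

noncomputable section

/-!
Every block `τ_β`, and the initial `1 + η`, has no greatest element, so no element strictly
below the first element of `τ_α` bounds everything lying before `τ_α`. That first element
exists because `α ∈ S` makes `τ_α = 1 + η`.
-/

instance ULift.instNoMaxOrder {A : Type*} [LT A] [NoMaxOrder A] : NoMaxOrder (ULift A) :=
  ⟨fun a => let ⟨b, hb⟩ := exists_gt a.down; ⟨⟨b⟩, hb⟩⟩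

theorem Sum.Lex.isLUB_inr {A B : Type*} [Preorder A] [NoMaxOrder A] [Preorder B]
    {P : B → Prop} {m : B} (h : IsLUB {b | P b} m) :
    IsLUB {x : A ⊕ₗ B | Sum.elim (fun _ => True) P (ofLex x)} (toLex (Sum.inr m)) := by
  refine ⟨?_, fun u hu => ?_⟩
  · rintro x hx
    obtain ⟨a | b, rfl⟩ := toLex.surjective x
    · exact Sum.Lex.inl_le_inr a m
    · exact Sum.Lex.inr_le_inr_iff.2 (h.1 hx)
  · obtain ⟨a | b, rfl⟩ := toLex.surjective u
    · obtain ⟨a', ha'⟩ := exists_gt a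
      exact absurd (Sum.Lex.inl_le_inl_iff.1 (hu (show toLex (Sum.inl a') ∈ _ from trivial)))
        ha'.not_ge
    · exact Sum.Lex.inr_le_inr_iff.2 (h.2 fun c hc => Sum.Lex.inr_le_inr_iff.1 (hu hc))

theorem Sigma.Lex.isLUB_fst_lt {ι : Type*} [LinearOrder ι] {β : ι → Type*}
    [∀ i, Preorder (β i)] [∀ i, NoMaxOrder (β i)] {i : ι} {b : β i} (hb : IsBot b) :
    IsLUB {p : Σₗ j, β j | p.1 < i} (toLex ⟨i, b⟩) := by
  refine ⟨fun p hp => Sigma.Lex.left _ _ hp, fun u hu => ?_⟩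
  obtain ⟨⟨j, t⟩, rfl⟩ := toLex.surjective u
  rcases lt_trichotomy j i with hji | rfl | hij
  · obtain ⟨t', ht'⟩ := exists_gt t
    rcases Sigma.Lex.le_def.1 (hu (show toLex ⟨j, t'⟩ ∈ _ from hji)) with hjj | ⟨_, htt'⟩
    · exact absurd hjj (lt_irrefl j)
    · exact absurd htt' ht'.not_ge
  · exact Sigma.Lex.right _ _ (hb t)
  · exact Sigma.Lex.left _ _ hij

/- `tau` is an `ite` on a classical decidability instance, which neither reduces nor can be
generalized (the casts in `instLinearOrderTau` mention it); abstracting it lets `cases` compute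
the block together with its order. -/
def tauDec (S : Set Ordinal) (α : Ordinal) (d : Decidable (α ∈ S)) : Type :=
  @ite _ (α ∈ S) d (Unit ⊕ₗ ℚ) ℚ

instance (S : Set Ordinal) (α : Ordinal) (d : Decidable (α ∈ S)) :
    LinearOrder (tauDec S α d) := by
  unfold tauDec; split <;> infer_instance

theorem tauDec_exists_isBot (S : Set Ordinal) {α : Ordinal} (d : Decidable (α ∈ S))
    (h : α ∈ S) : ∃ e : tauDec S α d, IsBot e := by
  cases d
  · contradiction
  · exact ⟨show Unit ⊕ₗ ℚ from ⊥, isBot_bot (α := Unit ⊕ₗ ℚ)⟩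

theorem tauDec_noMaxOrder (S : Set Ordinal) (α : Ordinal) (d : Decidable (α ∈ S)) :
    NoMaxOrder (tauDec S α d) := by
  cases d
  · exact inferInstanceAs (NoMaxOrder ℚ)
  · exact inferInstanceAs (NoMaxOrder (Unit ⊕ₗ ℚ))

theorem tau_exists_isBot (S : Set Ordinal) {α : Ordinal} (h : α ∈ S) :
    ∃ e : tau S α, IsBot e :=
  tauDec_exists_isBot S _ h

instance (S : Set Ordinal) (α : Ordinal) : NoMaxOrder (tau S α) :=
  tauDec_noMaxOrder S α _

theorem stmt15_general (S : Set Ordinal)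
    (α : Ordinal) (hα : α < omegaOne) (hαS : α ∈ S) :
    ∃ m ∈ inBlock S α, IsLUB (below S α) m ∧ ∀ y ∈ inBlock S α, m ≤ y := by
  obtain ⟨e, he⟩ := tau_exists_isBot S hαS
  refine ⟨toLex (Sum.inr (toLex ⟨⟨α, hα⟩, e⟩)), ⟨_, rfl, rfl⟩,
    Sum.Lex.isLUB_inr (Sigma.Lex.isLUB_fst_lt (i := (⟨α, hα⟩ : {β // β < omegaOne})) he), ?_⟩
  rintro y ⟨⟨⟨j, hj⟩, t⟩, hy, rfl⟩
  rw [← toLex_ofLex y, hy]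
  exact Sum.Lex.inr_le_inr_iff.2 (Sigma.Lex.right _ _ (he t))

/-- for `α ∈ S`, the set of elements of `Φ(S)` lying in blocks
`τ_β` with `β < α` (together with the initial `1 + η` part) has a least upper
bound, namely the first element of the block `τ_α`. -/
theorem stmt15 (S : Set Ordinal) (hS : S ⊆ Set.Iio omegaOne)
    (α : Ordinal) (hα : α < omegaOne) (hαS : α ∈ S) :
    ∃ m ∈ inBlock S α, IsLUB (below S α) m ∧ ∀ y ∈ inBlock S α, m ≤ y :=
  stmt15_general S α hα hαS
end
end

section
/- Let δ ≤ ω₁ be a limit ordinal and let (C_β)_{β<δ} be a strictly increasing chain in T_S under end-extension, and let γ = sup_{β<δ} sup C_β. If γ ∈ S, then (⋃_{β<δ} C_β) ∪ {γ} is an element of T_S extending every C_β; if γ ∉ S and γ is a limit point of ⋃_{β<δ} C_β, then the chain has no upper bound in T_S. -/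
open Set

noncomputable section

/-- `TSet S` is the set of countable closed bounded subsets of `S`. -/
def TSet (S : Set Ordinal) : Set (Set Ordinal) :=
  {C | C.Countable ∧ C ⊆ S ∧ OClosed C ∧ BddAbove C}

/-- End-extension order: `C ≤ C'` iff `C = C' ∩ (sup C + 1)`,
with the convention that `∅` is below everything. -/
def EExt (C C' : Set Ordinal) : Prop :=
  C = ∅ ∨ C = C' ∩ Set.Iic (sSup C)

/-- A stationary subset of `ω₁`: meets every club. -/
def Stat' (E : Set Ordinal) : Prop :=
  E ⊆ Set.Iio omegaOne ∧ ∀ C, Club' C → (E ∩ C).Nonempty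

/-- let `δ ≤ ω₁` be a limit ordinal and `(C_β)_{β<δ}` a
strictly increasing chain in `T_S`, and `γ = sup_{β<δ} sup C_β`.  If `γ ∈ S`
then `(⋃_{β<δ} C_β) ∪ {γ}` is an element of `T_S` extending every `C_β`;
if `γ ∉ S` and `γ` is a limit point of `⋃_{β<δ} C_β`, the chain has no upper
bound in `T_S`. -/
theorem stmt17 (S : Set Ordinal) (hS : S ⊆ Set.Iio omegaOne)
    (δ : Ordinal) (hδlim : Order.IsSuccLimit δ) (hδ : δ ≤ omegaOne)
    (C : Ordinal → Set Ordinal) (hmem : ∀ β < δ, C β ∈ TSet S)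
    (hmono : ∀ β γ', β < γ' → γ' < δ → EExt (C β) (C γ') ∧ C β ≠ C γ')
    (γ : Ordinal) (hγ : γ = sSup {x | ∃ β < δ, x = sSup (C β)}) :
    (γ ∈ S →
      (⋃ β ∈ Set.Iio δ, C β) ∪ {γ} ∈ TSet S ∧
      ∀ β < δ, EExt (C β) ((⋃ β ∈ Set.Iio δ, C β) ∪ {γ})) ∧
    (γ ∉ S → 0 < γ → sSup ((⋃ β ∈ Set.Iio δ, C β) ∩ Set.Iio γ) = γ →
      ¬ ∃ D ∈ TSet S, ∀ β < δ, EExt (C β) D) := by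
  have hsub : ∀ ⦃β β'⦄, β ≤ β' → β' < δ → C β ⊆ C β' := by
    intro β β' hle hlt
    rcases eq_or_lt_of_le hle with rfl | h
    · exact subset_rfl
    · rcases (hmono β β' h hlt).1 with h0 | h0
      · simp [h0]
      · rw [h0]; exact inter_subset_left
  have hbddΓ : BddAbove {x | ∃ β < δ, x = sSup (C β)} := by
    refine ⟨omegaOne, ?_⟩
    rintro x ⟨β, hβ, rfl⟩
    rcases eq_empty_or_nonempty (C β) with he | hne
    · simp [he, csSup_empty, zero_le]
    · exact csSup_le hne fun y hy => le_of_lt (hS ((hmem β hβ).2.1 hy))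
  have hsuple : ∀ β < δ, sSup (C β) ≤ γ := by
    intro β hβ; rw [hγ]; exact le_csSup hbddΓ ⟨β, hβ, rfl⟩
  have hmemU : ∀ x, x ∈ (⋃ β ∈ Set.Iio δ, C β) ↔ ∃ β < δ, x ∈ C β := by
    intro x; simp only [mem_iUnion, mem_Iio, exists_prop]
  have hUle : ∀ x ∈ (⋃ β ∈ Set.Iio δ, C β), x ≤ γ := by
    intro x hx
    obtain ⟨β, hβ, hx⟩ := (hmemU x).1 hx
    exact le_trans (le_csSup (hmem β hβ).2.2.2 hx) (hsuple β hβ)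
  have hUS : (⋃ β ∈ Set.Iio δ, C β) ⊆ S := by
    intro x hx
    obtain ⟨β, hβ, hx⟩ := (hmemU x).1 hx
    exact (hmem β hβ).2.1 hx
  -- membership of suprema below γ in the union
  have hX : ∀ X ⊆ (⋃ β ∈ Set.Iio δ, C β), X.Nonempty → BddAbove X → sSup X < γ →
      sSup X ∈ (⋃ β ∈ Set.Iio δ, C β) := by
    intro X hXU hXne hXbdd hXlt
    rw [hγ] at hXlt
    obtain ⟨x, ⟨β, hβ, rfl⟩, hlt⟩ := exists_lt_of_lt_csSup (⟨sSup (C 0), 0, hδlim.pos, rfl⟩ : Set.Nonempty {x | ∃ β < δ, x = sSup (C β)}) hXlt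
    have hXC : X ⊆ C β := by
      intro y hy
      have hys : y ≤ sSup X := le_csSup hXbdd hy
      obtain ⟨β₁, hβ₁, hy₁⟩ := (hmemU y).1 (hXU hy)
      rcases le_or_gt β₁ β with h | h
      · exact hsub h hβ hy₁
      · rcases (hmono β β₁ h hβ₁).1 with h0 | h0
        · exact absurd (lt_of_le_of_lt hys hlt)
            (by simp [h0, csSup_empty, not_lt_zero])
        · rw [h0]; exact ⟨hy₁, le_of_lt (lt_of_le_of_lt hys hlt)⟩
    exact (hmemU _).2 ⟨β, hβ, (hmem β hβ).2.2.1 X hXC hXne hXbdd⟩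
  constructor
  · -- γ ∈ S
    intro hγS
    have hγω : γ < omegaOne := hS hγS
    have hsubS : (⋃ β ∈ Set.Iio δ, C β) ∪ {γ} ⊆ S :=
      union_subset hUS (by simpa using hγS)
    have hbA : ∀ x ∈ (⋃ β ∈ Set.Iio δ, C β) ∪ {γ}, x ≤ γ := by
      rintro x (hx | hx)
      · exact hUle x hx
      · simp_all
    have hTS : (⋃ β ∈ Set.Iio δ, C β) ∪ {γ} ∈ TSet S := by
      refine ⟨?_, hsubS, ?_, ⟨γ, hbA⟩⟩
      · -- countable
        have hcnt : (Set.Iic γ).Countable := by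
          rw [Cardinal.countable_iff_lt_aleph_one, ← Order.Iio_succ, ← Ordinal.add_one_eq_succ,
            Ordinal.mk_Iio_ordinal]
          have h1 : γ + 1 < omegaOne :=
            (Cardinal.isSuccLimit_ord (Cardinal.aleph0_le_aleph 1)).succ_lt hγω
          have h2 : (γ + 1).card ≤ Cardinal.aleph0 := by
            have := Cardinal.lt_ord.1 h1
            rwa [← Cardinal.succ_aleph0, Order.lt_succ_iff] at this
          exact lt_of_le_of_lt (Cardinal.lift_le_aleph0.2 h2) Cardinal.aleph0_lt_aleph_one
        exact hcnt.mono hbA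
      · -- closed
        intro X hXA hXne hXbdd
        have hle : sSup X ≤ γ := csSup_le hXne fun y hy => hbA y (hXA hy)
        rcases eq_or_lt_of_le hle with he | hlt
        · right; simp [he]
        · have hXU : X ⊆ (⋃ β ∈ Set.Iio δ, C β) := by
            intro y hy
            rcases hXA hy with h | h
            · exact h
            · exact absurd (le_csSup hXbdd hy) (by simp_all [not_le_of_gt hlt])
          exact Or.inl (hX X hXU hXne hXbdd hlt)
    refine ⟨hTS, ?_⟩
    intro β hβ
    rcases eq_empty_or_nonempty (C β) with he | hne
    · exact Or.inl he
    · right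
      ext x
      constructor
      · intro hx
        exact ⟨Or.inl ((hmemU x).2 ⟨β, hβ, hx⟩), le_csSup (hmem β hβ).2.2.2 hx⟩
      · rintro ⟨hx | hx, hxle⟩
        · obtain ⟨β₁, hβ₁, hx₁⟩ := (hmemU x).1 hx
          rcases le_or_gt β₁ β with h | h
          · exact hsub h hβ hx₁
          · rcases (hmono β β₁ h hβ₁).1 with h0 | h0
            · exact absurd h0 (nonempty_iff_ne_empty.1 hne)
            · rw [h0]; exact ⟨hx₁, hxle⟩
        · simp only [mem_singleton_iff] at hx
          have hge : γ = sSup (C β) := le_antisymm (hx ▸ hxle) (hsuple β hβ)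
          rw [hx, hge]
          exact (hmem β hβ).2.2.1 (C β) subset_rfl hne (hmem β hβ).2.2.2
  · -- γ ∉ S
    rintro hγS hpos hlim ⟨D, hD, hext⟩
    have hUD : (⋃ β ∈ Set.Iio δ, C β) ∩ Set.Iio γ ⊆ D := by
      rintro x ⟨hx, -⟩
      obtain ⟨β, hβ, hx⟩ := (hmemU x).1 hx
      rcases hext β hβ with h0 | h0
      · simp [h0] at hx
      · rw [h0] at hx; exact hx.1
    have hne : ((⋃ β ∈ Set.Iio δ, C β) ∩ Set.Iio γ).Nonempty := by
      rcases eq_empty_or_nonempty ((⋃ β ∈ Set.Iio δ, C β) ∩ Set.Iio γ) with he | h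
      · rw [he, csSup_empty] at hlim
        exact absurd hlim.symm (ne_of_gt hpos)
      · exact h
    have hbdd : BddAbove ((⋃ β ∈ Set.Iio δ, C β) ∩ Set.Iio γ) :=
      ⟨γ, fun x hx => le_of_lt hx.2⟩
    have : γ ∈ D := hlim ▸ hD.2.2.1 _ hUD hne hbdd
    exact hγS (hD.2.1 this)
end
end
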